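/- Let μ ∈ ℂ with |μ| = 1 and μ ≠ 1, so that a = (μ+μ⁻¹)/2 and b = i(μ⁻¹−μ)/2 are real and a ≠ 1. Let n ∈ ℍ with Re n = 0 and n² = −1, and set T = ½(n·(a−1) + b) ∈ ℍ. Then T·(n + b/(1−a)) = 1 = (n + b/(1−a))·T (so T is invertible with T⁻¹ = n + b/(1−a)), T commutes with n, and consequently T⁻¹·n·T = n. (The μ ∈ S¹ case: T is independent of the parallel section, T⁻¹ = N + b/(1−a), and the μ-Darboux transform of the harmonic map is trivial.) -/

import Mathlib

/-! Since `n * n = -1`, there is an `ℝ`-algebra map `φ : ℂ → ℍ` with `φ i = n`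
(`Complex.liftAux`). For `|μ| = 1` we have `a = Re μ` and `b = Im μ`, so `T = φ w` with
`w = i(μ̄ - 1)/2`, and `n + b/(1-a) = φ w⁻¹`. All the identities are then images under `φ`
of identities in the field `ℂ`, and `T` commutes with `n = φ i` because `ℂ` is commutative. -/

noncomputable section
open Complex ComplexConjugate

local notation "ℍ" => Quaternion ℝ

/-- Embedding of ℂ into ℍ as the real span of 1 and i. -/
def cq (z : ℂ) : ℍ := ⟨z.re, z.im, 0, 0⟩

/-- a = (μ+μ⁻¹)/2. -/
def aμ (μ : ℂ) : ℂ := (μ + μ⁻¹) / 2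

/-- b = i(μ⁻¹−μ)/2. -/
def bμ (μ : ℂ) : ℂ := Complex.I * (μ⁻¹ - μ) / 2

/-- T = ½(n·(a−1) + b) for μ ∈ S¹. -/
def TS1 (μ : ℂ) (n : ℍ) : ℍ := (n * cq (aμ μ - 1) + cq (bμ μ)) / 2

theorem cq_ofReal (r : ℝ) : cq r = (r : ℍ) := by
  ext <;> simp [cq]

section UnitCircle

variable {μ : ℂ}

theorem aμ_eq_re (habs : ‖μ‖ = 1) : aμ μ = μ.re := by
  apply Complex.ext <;> simp [aμ, inv_eq_conj habs]

theorem bμ_eq_im (habs : ‖μ‖ = 1) : bμ μ = μ.im := by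
  apply Complex.ext <;> simp [bμ, inv_eq_conj habs]

theorem re_sq_add_im_sq_eq_one (habs : ‖μ‖ = 1) : μ.re ^ 2 + μ.im ^ 2 = 1 := by
  have h := Complex.sq_norm μ
  rw [habs, one_pow, normSq_apply] at h
  linear_combination -h

theorem re_ne_one_of_norm_eq_one (habs : ‖μ‖ = 1) (hμ1 : μ ≠ 1) : μ.re ≠ 1 := by
  intro hre
  have him : μ.im = 0 := by nlinarith [re_sq_add_im_sq_eq_one habs]
  exact hμ1 (Complex.ext hre him)

end UnitCircle

theorem inv_I_mul_conj_sub_one_div_two {μ : ℂ} (habs : ‖μ‖ = 1) (hμ1 : μ ≠ 1) :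
    (I * (conj μ - 1) / 2)⁻¹ = ((μ.im / (1 - μ.re) : ℝ) : ℂ) + I := by
  have hden : 1 - μ.re ≠ 0 := sub_ne_zero.mpr (re_ne_one_of_norm_eq_one habs hμ1).symm
  refine inv_eq_of_mul_eq_one_right (Complex.ext ?_ ?_) <;>
    simp only [mul_re, mul_im, add_re, add_im, sub_re, sub_im, div_ofNat_re, div_ofNat_im, conj_re,
      conj_im, ofReal_re, ofReal_im, I_re, I_im, one_re, one_im] <;>
    field_simp
  · linear_combination re_sq_add_im_sq_eq_one habs
  · ring

theorem liftAux_ofReal {A : Type*} [Ring A] [Algebra ℝ A] (j : A) (hj : j * j = -1) (r : ℝ) :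
    liftAux j hj r = algebraMap ℝ A r := by
  rw [← coe_algebraMap, AlgHom.commutes]

section LiftAux

variable {μ : ℂ} {n : ℍ} (hsq : n * n = -1)

theorem TS1_eq_liftAux (habs : ‖μ‖ = 1) :
    TS1 μ n = liftAux n hsq (I * (conj μ - 1) / 2) := by
  have hparts : I * (conj μ - 1) / 2 = ((μ.im : ℂ) + ((μ.re - 1 : ℝ) : ℂ) * I) / 2 := by
    apply Complex.ext <;> simp
  rw [hparts, map_div₀, map_add, map_mul, liftAux_ofReal, liftAux_ofReal, liftAux_apply_I,
    map_ofNat, Quaternion.algebraMap_def, TS1, aμ_eq_re habs, bμ_eq_im habs, ← ofReal_one,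
    ← ofReal_sub, cq_ofReal, cq_ofReal, Quaternion.coe_commutes, add_comm]

theorem add_cq_eq_liftAux (habs : ‖μ‖ = 1) (hμ1 : μ ≠ 1) :
    n + cq (bμ μ / (1 - aμ μ)) = liftAux n hsq (I * (conj μ - 1) / 2)⁻¹ := by
  rw [inv_I_mul_conj_sub_one_div_two habs hμ1, map_add, liftAux_apply_I, liftAux_ofReal,
    Quaternion.algebraMap_def, aμ_eq_re habs, bμ_eq_im habs, ← ofReal_one, ← ofReal_sub,
    ← ofReal_div, cq_ofReal, add_comm]

end LiftAux

theorem stmt_8 (μ : ℂ) (habs : ‖μ‖ = 1) (hμ1 : μ ≠ 1)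
    (n : ℍ) (hsq : n * n = -1) :
    (aμ μ).im = 0 ∧ (bμ μ).im = 0 ∧ aμ μ ≠ 1
    ∧ TS1 μ n * (n + cq (bμ μ / (1 - aμ μ))) = 1
    ∧ (n + cq (bμ μ / (1 - aμ μ))) * TS1 μ n = 1
    ∧ (TS1 μ n)⁻¹ = n + cq (bμ μ / (1 - aμ μ))
    ∧ TS1 μ n * n = n * TS1 μ n
    ∧ (TS1 μ n)⁻¹ * n * TS1 μ n = n := by
  set φ := liftAux n hsq
  set w : ℂ := I * (conj μ - 1) / 2
  have hw : w ≠ 0 := by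
    have : conj μ ≠ 1 := fun h => hμ1 (by simpa using congrArg conj h)
    simpa [w, sub_eq_zero, I_ne_zero] using this
  have hT : TS1 μ n = φ w := TS1_eq_liftAux hsq habs
  have hS : n + cq (bμ μ / (1 - aμ μ)) = φ w⁻¹ := add_cq_eq_liftAux hsq habs hμ1
  have hTS : TS1 μ n * (n + cq (bμ μ / (1 - aμ μ))) = 1 := by
    rw [hT, hS, ← map_mul, mul_inv_cancel₀ hw, map_one]
  have hST : (n + cq (bμ μ / (1 - aμ μ))) * TS1 μ n = 1 := by
    rw [hT, hS, ← map_mul, inv_mul_cancel₀ hw, map_one]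
  have hcomm : TS1 μ n * n = n * TS1 μ n := by
    rw [hT, ← liftAux_apply_I n hsq, ← map_mul, mul_comm, map_mul]
  have hinv : (TS1 μ n)⁻¹ = n + cq (bμ μ / (1 - aμ μ)) := inv_eq_of_mul_eq_one_right hTS
  have ha : aμ μ ≠ 1 := by
    rw [aμ_eq_re habs]
    exact_mod_cast re_ne_one_of_norm_eq_one habs hμ1
  refine ⟨by simp [aμ_eq_re habs], by simp [bμ_eq_im habs], ha, hTS, hST, hinv, hcomm, ?_⟩
  rw [mul_assoc, ← hcomm, ← mul_assoc, hinv, hST, one_mul]
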